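/- Let P be a nonzero polynomial over ℂ, let n ≥ 1 be an integer, let ε be a primitive n-th root of unity, and let c ∈ ℂ be such that c·P(z) = P(εz) for all z ∈ ℂ. Then there exist an integer r with 0 ≤ r < n and a polynomial R over ℂ such that c = ε^r and P(z) = z^r·R(z^n). -/

import Mathlib

open Polynomial

/-! Comparing coefficients in `c P(z) = P(ε z)` gives `c = ε ^ k` for every exponent `k` occurring
in `P`, so all these exponents lie in one residue class `r` modulo the order `n` of `ε`. -/

namespace Polynomial

variable {R : Type*}

theorem coeff_comp_C_mul_X [CommSemiring R] (p : R[X]) (a : R) (k : ℕ) :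
    (p.comp (C a * X)).coeff k = a ^ k * p.coeff k := by
  induction p using Polynomial.induction_on' with
  | add p q hp hq => simp only [add_comp, coeff_add, hp, hq, mul_add]
  | monomial m b =>
    rw [monomial_comp, mul_pow, ← C_pow, ← mul_assoc, ← C_mul, coeff_C_mul_X_pow, coeff_monomial]
    by_cases hkm : k = m
    · simp [hkm, mul_comm]
    · simp [hkm, Ne.symm hkm]

theorem exists_eq_X_pow_mul_comp_X_pow [CommSemiring R] (p : R[X]) {n r : ℕ}
    (h : ∀ k ∈ p.support, k % n = r) : ∃ q : R[X], p = X ^ r * q.comp (X ^ n) := by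
  refine ⟨∑ k ∈ p.support, C (p.coeff k) * X ^ (k / n), ?_⟩
  conv_lhs => rw [p.as_sum_support_C_mul_X_pow]
  rw [sum_comp, Finset.mul_sum]
  refine Finset.sum_congr rfl fun k hk => ?_
  rw [mul_comp, C_comp, pow_comp, X_comp, ← pow_mul, mul_left_comm, ← pow_add, ← h k hk,
    Nat.mod_add_div]

theorem eq_pow_of_C_mul_eq_comp_C_mul_X [CommRing R] [IsDomain R] {p : R[X]} {c a : R}
    (h : C c * p = p.comp (C a * X)) {k : ℕ} (hk : k ∈ p.support) : c = a ^ k := by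
  have hcoeff := congr_arg (coeff · k) h
  simp only [coeff_C_mul, coeff_comp_C_mul_X] at hcoeff
  exact mul_right_cancel₀ (mem_support_iff.mp hk) hcoeff

end Polynomial

/-- If `c ⬝ P(z) = P(ε z)` for a primitive `n`-th root of unity `ε`, then
`c = ε ^ r` and `P = z ^ r R(z ^ n)` for some `0 ≤ r < n` and polynomial `R`. -/
theorem root_of_unity_symmetry (P : Polynomial ℂ) (hP : P ≠ 0) (n : ℕ) (hn : 1 ≤ n)
    (ε : ℂ) (hε : IsPrimitiveRoot ε n) (c : ℂ)
    (h : ∀ z : ℂ, c * P.eval z = P.eval (ε * z)) :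
    ∃ (r : ℕ) (R : Polynomial ℂ), r < n ∧ c = ε ^ r ∧
      P = Polynomial.X ^ r * R.comp (Polynomial.X ^ n) := by
  have hcomp : C c * P = P.comp (C ε * X) := Polynomial.funext fun z => by simp [h z]
  have hord : orderOf ε = n := hε.eq_orderOf.symm
  have hfin : IsOfFinOrder ε := orderOf_pos_iff.mp (hord ▸ hn)
  have hdeg : P.natDegree ∈ P.support := natDegree_mem_support_of_nonzero hP
  have hc : c = ε ^ (P.natDegree % n) := by
    rw [← hord, pow_mod_orderOf, eq_pow_of_C_mul_eq_comp_C_mul_X hcomp hdeg]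
  have hmod : ∀ k ∈ P.support, k % n = P.natDegree % n := fun k hk => by
    rw [← hord, ← hfin.pow_inj_mod, ← eq_pow_of_C_mul_eq_comp_C_mul_X hcomp hk,
      ← eq_pow_of_C_mul_eq_comp_C_mul_X hcomp hdeg]
  obtain ⟨R, hR⟩ := exists_eq_X_pow_mul_comp_X_pow P hmod
  exact ⟨_, R, Nat.mod_lt _ hn, hc, hR⟩
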